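/- Let R be a Gorenstein local ring, M a finitely generated maximal Cohen–Macaulay R-module, and 0 → Ω(M) → F → M → 0 an exact sequence with F → M a projective cover (F free, kernel contained in m·F). Then the first syzygy Ω(M) in a minimal free resolution of M has no nonzero free direct summand. -/

import Mathlib

open CategoryTheory IsLocalRing

noncomputable def extMod (R : Type) [CommRing R] (M : Type) [AddCommGroup M] [Module R M]
    (N : Type) [AddCommGroup N] [Module R N] (n : ℕ) : ModuleCat R :=
  ((Ext R (ModuleCat R) n).obj (Opposite.op (ModuleCat.of R M))).obj (ModuleCat.of R N)

/-- Depth of the module `M` with respect to the ideal `J`: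
the supremum of lengths of `M`-regular sequences contained in `J`. -/
noncomputable def edepth {R : Type} [CommRing R] (J : Ideal R) (M : Type) [AddCommGroup M]
    [Module R M] : ℕ∞ :=
  sSup {n : ℕ∞ | ∃ rs : List R, (rs.length : ℕ∞) = n ∧ (∀ r ∈ rs, r ∈ J) ∧
    RingTheory.Sequence.IsRegular M rs}

/-- `M` is a maximal Cohen–Macaulay module over the local ring `R`. -/
def IsMCM (R : Type) [CommRing R] [IsLocalRing R] (M : Type) [AddCommGroup M]
    [Module R M] : Prop :=
  (edepth (maximalIdeal R) M : WithBot ℕ∞) = ringKrullDim R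

/-- `R` is a Cohen–Macaulay local ring. -/
def IsCohenMacaulayLocal (R : Type) [CommRing R] [IsLocalRing R] : Prop := IsMCM R R

/-- `R` is a Gorenstein local ring: Cohen–Macaulay and `Ext^n(k, R) ≅ k` in the right degree,
with all other `Ext^i(k, R)` vanishing. -/
def IsGorensteinLocal (R : Type) [CommRing R] [IsLocalRing R] : Prop :=
  IsCohenMacaulayLocal R ∧ ∃ n : ℕ,
    (∀ i : ℕ, i ≠ n → Subsingleton (extMod R (ResidueField R) R i)) ∧
    Nonempty ((extMod R (ResidueField R) R n) ≅ ModuleCat.of R (ResidueField R))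



section SyzygyLemmas

open Pointwise RingTheory.Sequence Submodule Function

section AssFinite

variable {R : Type*} [CommRing R] {N : Type*} [AddCommGroup N] [Module R N]

/-- Ass(N) ⊆ Ass(W) ∪ Ass(N/W). -/
theorem ass_subset_union (W : Submodule R N) :
    associatedPrimes R N ⊆
      associatedPrimes R W ∪ associatedPrimes R (N ⧸ W) := by
  exact associatedPrimes.subset_union_of_exact W.injective_subtype (LinearMap.exact_subtype_mkQ W)

end AssFinite


variable {R : Type*} [CommRing R] [IsNoetherianRing R]

theorem ass_finite (N : Type*) [AddCommGroup N] [Module R N] [Module.Finite R N] :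
    (associatedPrimes R N).Finite := by
  have hN : IsNoetherian R N := inferInstance
  -- induction on submodules W: Ass(N/W) finite
  suffices h : ∀ W : Submodule R N, (associatedPrimes R (N ⧸ W)).Finite by
    have := h ⊥
    have e : (N ⧸ (⊥ : Submodule R N)) ≃ₗ[R] N := Submodule.quotEquivOfEqBot _ rfl
    rwa [LinearEquiv.AssociatedPrimes.eq e] at this
  by_contra h
  push_neg at h
  obtain ⟨W, hW, hWmax⟩ := set_has_maximal_iff_noetherian.mpr hN
    {W : Submodule R N | ¬ (associatedPrimes R (N ⧸ W)).Finite} (by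
      obtain ⟨W, hW⟩ := h; exact ⟨W, hW⟩)
  rcases subsingleton_or_nontrivial (N ⧸ W) with hsub | hnt
  · exact hW (by rw [associatedPrimes.eq_empty_of_subsingleton]; exact Set.finite_empty)
  · obtain ⟨P, hP⟩ := associatedPrimes.nonempty R (N ⧸ W)
    obtain ⟨hPp, z, hz⟩ := isAssociatedPrime_iff.mp hP
    -- z ≠ 0
    have hz0 : z ≠ 0 := by
      rintro rfl
      apply hPp.ne_top
      rw [hz, Submodule.colon_singleton_zero]
    set W' : Submodule R N := Submodule.comap W.mkQ (Submodule.span R {z}) with hW'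
    have hWW' : W < W' := by
      rcases Submodule.Quotient.mk_surjective W z with ⟨zl, hzl⟩
      refine lt_of_le_of_ne (fun w hw => ?_) (fun hEq => ?_)
      · simp only [hW', Submodule.mem_comap]
        have : W.mkQ w = 0 := by simpa [Submodule.mkQ_apply, Submodule.Quotient.mk_eq_zero] using hw
        rw [this]; exact Submodule.zero_mem _
      · apply hz0
        have : zl ∈ W' := by
          simp only [hW', Submodule.mem_comap, Submodule.mkQ_apply, hzl]
          exact Submodule.mem_span_singleton_self z
        rw [← hEq] at this
        rw [← hzl]
        simpa [Submodule.Quotient.mk_eq_zero] using this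
    have hfin' : (associatedPrimes R (N ⧸ W')).Finite := by
      by_contra hc
      exact hWmax W' hc hWW'
    apply hW
    -- span z as submodule of N⧸W
    have hmap : Submodule.map W.mkQ W' = Submodule.span R {z} := by
      rw [hW', Submodule.map_comap_eq, Submodule.range_mkQ, top_inf_eq]
    have key := ass_subset_union (R := R) (N := N ⧸ W) (Submodule.span R {z})
    -- Ass (span z) = {P}
    have e1 : (R ⧸ P) ≃ₗ[R] (Submodule.span R {z} : Submodule R (N ⧸ W)) := by
      have : P = Ideal.torsionOf R (N ⧸ W) z := by
        ext a
        rw [hz, Submodule.mem_colon_singleton, Submodule.mem_bot, Ideal.mem_torsionOf_iff]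
      rw [this]
      exact Ideal.quotTorsionOfEquivSpanSingleton R (N ⧸ W) z
    have hassz : associatedPrimes R (Submodule.span R {z} : Submodule R (N ⧸ W)) = {P} := by
      rw [← LinearEquiv.AssociatedPrimes.eq e1,
        associatedPrimes.eq_singleton_of_isPrimary hPp.isPrimary, Ideal.IsPrime.radical hPp]
    -- (N⧸W)⧸span z ≃ N⧸W'
    have e2 : ((N ⧸ W) ⧸ (Submodule.span R {z} : Submodule R (N ⧸ W))) ≃ₗ[R] (N ⧸ W') := by
      rw [← hmap]
      exact Submodule.quotientQuotientEquivQuotient W W' (le_of_lt hWW')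
    apply Set.Finite.subset (Set.Finite.union (Set.finite_singleton P) hfin')
    intro Q hQ
    rcases key hQ with h1 | h1
    · left; rwa [hassz] at h1
    · right; rwa [LinearEquiv.AssociatedPrimes.eq e2] at h1


section Soc

variable (R : Type*) [CommRing R] [IsLocalRing R]

/-- `N` has a nonzero element killed by the maximal ideal. -/
def HasSoc (N : Type*) [AddCommGroup N] [Module R N] : Prop :=
  ∃ z : N, z ≠ 0 ∧ ∀ a ∈ maximalIdeal R, a • z = 0

variable {R}

theorem HasSoc.congr {N N₂ : Type*} [AddCommGroup N] [Module R N] [AddCommGroup N₂]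
    [Module R N₂] (e : N ≃ₗ[R] N₂) (h : HasSoc R N) : HasSoc R N₂ := by
  obtain ⟨z, hz0, hz⟩ := h
  exact ⟨e z, by simpa using hz0, fun a ha => by rw [← map_smul, hz a ha, map_zero]⟩

theorem hasSoc_congr_iff {N N₂ : Type*} [AddCommGroup N] [Module R N] [AddCommGroup N₂]
    [Module R N₂] (e : N ≃ₗ[R] N₂) : HasSoc R N ↔ HasSoc R N₂ :=
  ⟨fun h => h.congr e, fun h => h.congr e.symm⟩

theorem not_hasSoc_of_regular {N : Type*} [AddCommGroup N] [Module R N] {y : R}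
    (hy : y ∈ maximalIdeal R) (hreg : IsSMulRegular N y) : ¬ HasSoc R N := by
  rintro ⟨z, hz0, hz⟩
  exact hz0 (hreg (show y • z = y • 0 by rw [hz y hy, smul_zero]))

variable [IsNoetherianRing R]

theorem hasSoc_of_depth_zero {N : Type*} [AddCommGroup N] [Module R N] [Module.Finite R N]
    [Nontrivial N] (h : ∀ y ∈ maximalIdeal R, ¬ IsSMulRegular N y) : HasSoc R N := by
  -- every element of m lies in some associated prime
  have hsub : ∀ y ∈ maximalIdeal R, ∃ P ∈ associatedPrimes R N, y ∈ P := by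
    intro y hy
    obtain ⟨z₁, z₂, hz, hne⟩ := Function.not_injective_iff.mp (h y hy)
    have hz0 : z₁ - z₂ ≠ 0 := sub_ne_zero.mpr hne
    obtain ⟨P, hP, hle⟩ := exists_le_isAssociatedPrime_of_isNoetherianRing R (z₁ - z₂) hz0
    refine ⟨P, hP, hle ?_⟩
    rw [Submodule.mem_colon_singleton, Submodule.mem_bot, smul_sub, hz, sub_self]
  obtain ⟨P₀, hP₀⟩ := associatedPrimes.nonempty R N
  have hfin := ass_finite (R := R) N
  -- prime avoidance
  have havoid := Ideal.subset_union_prime (R := R) (I := maximalIdeal R) (s := hfin.toFinset)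
    (f := id) P₀ P₀ (fun P hP _ _ => (hfin.mem_toFinset.mp hP).isPrime)
  have hcov : ((maximalIdeal R : Ideal R) : Set R) ⊆ ⋃ P ∈ hfin.toFinset, (id P : Set R) := by
    intro y hy
    obtain ⟨P, hP, hyP⟩ := hsub y hy
    exact Set.mem_biUnion (hfin.mem_toFinset.mpr hP) hyP
  obtain ⟨P, hPmem, hmP⟩ := havoid.mp hcov
  have hPass := hfin.mem_toFinset.mp hPmem
  have hPm : P = maximalIdeal R :=
    le_antisymm (le_maximalIdeal hPass.isPrime.ne_top) hmP
  obtain ⟨hprime, z, hz⟩ := isAssociatedPrime_iff.mp hPass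
  refine ⟨z, ?_, fun a ha => ?_⟩
  · rintro rfl
    apply hprime.ne_top
    rw [hz, Submodule.colon_singleton_zero]
  · have : a ∈ P := hPm ▸ ha
    rw [hz, Submodule.mem_colon_singleton, Submodule.mem_bot] at this
    exact this

theorem exists_common_regular {N₁ N₂ : Type*} [AddCommGroup N₁] [Module R N₁]
    [Module.Finite R N₁] [Nontrivial N₁] [AddCommGroup N₂] [Module R N₂] [Module.Finite R N₂]
    (h₁ : ¬ HasSoc R N₁) (h₂ : ¬ HasSoc R N₂) :
    ∃ y ∈ maximalIdeal R, IsSMulRegular N₁ y ∧ IsSMulRegular N₂ y := by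
  by_contra hc
  push_neg at hc
  have h : ∀ y ∈ maximalIdeal R, ¬ IsSMulRegular (N₁ × N₂) y := by
    intro y hy hreg
    have hr₁ : IsSMulRegular N₁ y := fun a b hab => by
      have : y • ((a, 0) : N₁ × N₂) = y • ((b, 0) : N₁ × N₂) := by
        simp [Prod.ext_iff] at hab ⊢; exact hab
      simpa [Prod.ext_iff] using hreg this
    have hr₂ : IsSMulRegular N₂ y := fun a b hab => by
      have : y • ((0, a) : N₁ × N₂) = y • ((0, b) : N₁ × N₂) := by
        simp [Prod.ext_iff] at hab ⊢; exact hab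
      simpa [Prod.ext_iff] using hreg this
    exact hc y hy hr₁ hr₂
  obtain ⟨⟨z₁, z₂⟩, hz0, hz⟩ := hasSoc_of_depth_zero h
  have hor : z₁ ≠ 0 ∨ z₂ ≠ 0 := by
    by_contra hcc
    push_neg at hcc
    exact hz0 (by simp [Prod.ext_iff, hcc.1, hcc.2])
  rcases hor with h' | h'
  · exact h₁ ⟨z₁, h', fun a ha => congrArg Prod.fst (hz a ha)⟩
  · exact h₂ ⟨z₂, h', fun a ha => congrArg Prod.snd (hz a ha)⟩

end Soc


section Exchange

variable {R : Type*} [CommRing R] [IsLocalRing R]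
variable {N : Type*} [AddCommGroup N] [Module R N]

theorem mem_pointwise_smul_top_iff (a : R) (w : N) :
    w ∈ (a • ⊤ : Submodule R N) ↔ ∃ v : N, a • v = w := by
  constructor
  · intro hw
    have : w ∈ ((a • ⊤ : Submodule R N) : Set N) := hw
    rw [Submodule.coe_pointwise_smul] at this
    obtain ⟨v, -, hv⟩ := this
    exact ⟨v, hv⟩
  · rintro ⟨v, rfl⟩
    exact Submodule.smul_mem_pointwise_smul v a ⊤ trivial

/-- The Rees exchange lemma: if `a`, `z` are regular on `N`, with `z` in the maximal ideal,
then a socle element of `N⧸aN` yields one of `N⧸zN`. -/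
theorem HasSoc.exchange {a z : R} (hzm : z ∈ maximalIdeal R)
    (hra : IsSMulRegular N a) (hrz : IsSMulRegular N z)
    (h : HasSoc R (QuotSMulTop a N)) : HasSoc R (QuotSMulTop z N) := by
  obtain ⟨wq, hw0, hw⟩ := h
  obtain ⟨w, rfl⟩ := Submodule.Quotient.mk_surjective _ wq
  have hwmem : w ∉ (a • ⊤ : Submodule R N) := by
    rwa [Ne, Submodule.Quotient.mk_eq_zero] at hw0
  have hzw : z • w ∈ (a • ⊤ : Submodule R N) := by
    have := hw z hzm
    rwa [← Submodule.Quotient.mk_smul, Submodule.Quotient.mk_eq_zero] at this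
  obtain ⟨v, hv⟩ := (mem_pointwise_smul_top_iff a (z • w)).mp hzw
  refine ⟨Submodule.Quotient.mk v, ?_, ?_⟩
  · rw [Ne, Submodule.Quotient.mk_eq_zero]
    intro hvmem
    obtain ⟨t, ht⟩ := (mem_pointwise_smul_top_iff z v).mp hvmem
    apply hwmem
    have h1 : z • w = z • (a • t) := by
      rw [← hv, ← ht, smul_comm]
    exact (mem_pointwise_smul_top_iff a w).mpr ⟨t, (hrz h1).symm⟩
  · intro b hb
    rw [← Submodule.Quotient.mk_smul, Submodule.Quotient.mk_eq_zero]
    have hbw : b • w ∈ (a • ⊤ : Submodule R N) := by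
      have := hw b hb
      rwa [← Submodule.Quotient.mk_smul, Submodule.Quotient.mk_eq_zero] at this
    obtain ⟨u, hu⟩ := (mem_pointwise_smul_top_iff a (b • w)).mp hbw
    have h1 : a • (b • v) = a • (z • u) := by
      rw [smul_comm a b, hv, smul_comm b z, ← hu, smul_comm a z]
    exact (mem_pointwise_smul_top_iff z (b • v)).mpr ⟨u, (hra h1).symm⟩

end Exchange


section Rees

variable {R : Type*} [CommRing R] [IsLocalRing R]

theorem ofList_snoc_eq (as : List R) (a : R) :
    Ideal.ofList (as ++ [a]) = Ideal.ofList (a :: as) := by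
  simp only [Ideal.ofList_append, Ideal.ofList_cons, Ideal.ofList_nil, sup_bot_eq]
  rw [sup_comm]

theorem not_hasSoc_subsingleton {N : Type*} [AddCommGroup N] [Module R N] [Subsingleton N] :
    ¬ HasSoc R N := by
  rintro ⟨z, hz, -⟩
  exact hz (Subsingleton.elim _ _)

variable (N : Type*) [AddCommGroup N] [Module R N]

/-- `N ⧸ (as ++ [a])N ≃ (N ⧸ as N) ⧸ a (N ⧸ as N)`. -/
noncomputable def eSnoc (as : List R) (a : R) :
    (N ⧸ (Ideal.ofList (as ++ [a]) • ⊤ : Submodule R N)) ≃ₗ[R]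
      QuotSMulTop a (N ⧸ (Ideal.ofList as • ⊤ : Submodule R N)) :=
  (Submodule.quotEquivOfEq _ _ (by rw [ofList_snoc_eq])) ≪≫ₗ
    Submodule.quotOfListConsSMulTopEquivQuotSMulTopOuter N a as

theorem wr_snoc_iff (as : List R) (a : R) :
    IsWeaklyRegular N (as ++ [a]) ↔ IsWeaklyRegular N as ∧
      IsSMulRegular (N ⧸ (Ideal.ofList as • ⊤ : Submodule R N)) a := by
  rw [isWeaklyRegular_append_iff, isWeaklyRegular_singleton_iff]

variable {N}

theorem nontrivial_quot_ofList [Module.Finite R N] [Nontrivial N]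
    {rs : List R} (h : ∀ r ∈ rs, r ∈ maximalIdeal R) :
    Nontrivial (N ⧸ (Ideal.ofList rs • ⊤ : Submodule R N)) := by
  refine Submodule.Quotient.nontrivial_iff.mpr (ne_of_lt ?_)
  refine lt_top_iff_ne_top.mpr (Ne.symm ?_)
  apply Submodule.top_ne_ideal_smul_of_le_jacobson_annihilator
  refine Ideal.span_le.mpr fun r hr => IsLocalRing.maximalIdeal_le_jacobson _ (h r hr)

theorem nontrivial_quotSMulTop [Module.Finite R N] [Nontrivial N]
    {z : R} (h : z ∈ maximalIdeal R) : Nontrivial (QuotSMulTop z N) := by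
  refine Submodule.Quotient.nontrivial_iff.mpr (ne_of_lt ?_)
  refine lt_top_iff_ne_top.mpr (Ne.symm ?_)
  rw [← Submodule.ideal_span_singleton_smul]
  apply Submodule.top_ne_ideal_smul_of_le_jacobson_annihilator
  refine Ideal.span_le.mpr fun r hr => ?_
  rw [Set.mem_singleton_iff] at hr
  subst hr
  exact IsLocalRing.maximalIdeal_le_jacobson _ h

variable [IsNoetherianRing R]

/-- Rees's theorem: the depth-zero status of `N ⧸ (x₁,…,xₙ)N` only depends on `n`,
for weakly regular sequences in the maximal ideal. -/
theorem hasSoc_quot_congr (n : ℕ) :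
    ∀ (N : Type u) [AddCommGroup N] [Module R N] [Module.Finite R N] (xs ys : List R),
      xs.length = n → ys.length = n →
      (∀ r ∈ xs, r ∈ maximalIdeal R) → (∀ r ∈ ys, r ∈ maximalIdeal R) →
      IsWeaklyRegular N xs → IsWeaklyRegular N ys →
      (HasSoc R (N ⧸ (Ideal.ofList xs • ⊤ : Submodule R N)) ↔
        HasSoc R (N ⧸ (Ideal.ofList ys • ⊤ : Submodule R N))) := by
  induction n with
  | zero =>
    intro N _ _ _ xs ys hxl hyl _ _ _ _
    rw [List.eq_nil_of_length_eq_zero hxl, List.eq_nil_of_length_eq_zero hyl]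
  | succ n ih =>
    intro N _ _ _ xs ys hxl hyl hxm hym hxr hyr
    rcases subsingleton_or_nontrivial N with hN | hN
    · haveI : Subsingleton (N ⧸ (Ideal.ofList xs • ⊤ : Submodule R N)) :=
        (Submodule.mkQ_surjective _).subsingleton
      haveI : Subsingleton (N ⧸ (Ideal.ofList ys • ⊤ : Submodule R N)) :=
        (Submodule.mkQ_surjective _).subsingleton
      constructor <;> intro h <;> exact absurd h not_hasSoc_subsingleton
    have hxne : xs ≠ [] := by rintro rfl; simp at hxl
    have hyne : ys ≠ [] := by rintro rfl; simp at hyl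
    obtain ⟨as, a, rfl⟩ : ∃ as a, xs = as ++ [a] :=
      ⟨xs.dropLast, xs.getLast hxne, (List.dropLast_append_getLast hxne).symm⟩
    obtain ⟨bs, b, rfl⟩ : ∃ bs b, ys = bs ++ [b] :=
      ⟨ys.dropLast, ys.getLast hyne, (List.dropLast_append_getLast hyne).symm⟩
    have hasl : as.length = n := by simpa using hxl
    have hbsl : bs.length = n := by simpa using hyl
    have ham : a ∈ maximalIdeal R := hxm a (by simp)
    have hbm : b ∈ maximalIdeal R := hym b (by simp)
    have hasm : ∀ r ∈ as, r ∈ maximalIdeal R := fun r hr => hxm r (by simp [hr])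
    have hbsm : ∀ r ∈ bs, r ∈ maximalIdeal R := fun r hr => hym r (by simp [hr])
    obtain ⟨hasr, hareg⟩ := (wr_snoc_iff N as a).mp hxr
    obtain ⟨hbsr, hbreg⟩ := (wr_snoc_iff N bs b).mp hyr
    haveI : Nontrivial (N ⧸ (Ideal.ofList as • ⊤ : Submodule R N)) := nontrivial_quot_ofList hasm
    haveI : Nontrivial (N ⧸ (Ideal.ofList bs • ⊤ : Submodule R N)) := nontrivial_quot_ofList hbsm
    obtain ⟨z, hzm, hz1, hz2⟩ := exists_common_regular
      (not_hasSoc_of_regular ham hareg) (not_hasSoc_of_regular hbm hbreg)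
    -- weak regularity of z :: as and z :: bs
    have hwzx : IsWeaklyRegular N (as ++ [z]) := (wr_snoc_iff N as z).mpr ⟨hasr, hz1⟩
    have hwzy : IsWeaklyRegular N (bs ++ [z]) := (wr_snoc_iff N bs z).mpr ⟨hbsr, hz2⟩
    have hpx : IsWeaklyRegular N (z :: as) :=
      IsLocalRing.isWeaklyRegular_of_perm_of_subset_maximalIdeal hwzx
        (List.perm_append_comm (l₁ := as) (l₂ := [z]))
        (fun r hr => by
          rcases List.mem_append.mp hr with h | h
          · exact hasm r h
          · rw [List.mem_singleton] at h; subst h; exact hzm)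
    have hpy' : IsWeaklyRegular N (z :: bs) :=
      IsLocalRing.isWeaklyRegular_of_perm_of_subset_maximalIdeal hwzy
        (List.perm_append_comm (l₁ := bs) (l₂ := [z]))
        (fun r hr => by
          rcases List.mem_append.mp hr with h | h
          · exact hbsm r h
          · rw [List.mem_singleton] at h; subst h; exact hzm)
    have hconsx := (isWeaklyRegular_cons_iff N z as).mp hpx
    have hconsy := (isWeaklyRegular_cons_iff N z bs).mp hpy'
    haveI : Nontrivial (QuotSMulTop z N) := nontrivial_quotSMulTop hzm
    -- the chain of equivalences
    calc HasSoc R (N ⧸ (Ideal.ofList (as ++ [a]) • ⊤ : Submodule R N))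
        ↔ HasSoc R (QuotSMulTop a (N ⧸ (Ideal.ofList as • ⊤ : Submodule R N))) :=
          hasSoc_congr_iff (eSnoc N as a)
      _ ↔ HasSoc R (QuotSMulTop z (N ⧸ (Ideal.ofList as • ⊤ : Submodule R N))) :=
          ⟨HasSoc.exchange hzm hareg hz1, HasSoc.exchange ham hz1 hareg⟩
      _ ↔ HasSoc R (N ⧸ (Ideal.ofList (z :: as) • ⊤ : Submodule R N)) :=
          (hasSoc_congr_iff (Submodule.quotOfListConsSMulTopEquivQuotSMulTopOuter N z as)).symm
      _ ↔ HasSoc R ((QuotSMulTop z N) ⧸ (Ideal.ofList as • ⊤ : Submodule R (QuotSMulTop z N))) :=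
          hasSoc_congr_iff (Submodule.quotOfListConsSMulTopEquivQuotSMulTopInner N z as)
      _ ↔ HasSoc R ((QuotSMulTop z N) ⧸ (Ideal.ofList bs • ⊤ : Submodule R (QuotSMulTop z N))) :=
          ih (QuotSMulTop z N) as bs hasl hbsl hasm hbsm hconsx.2 hconsy.2
      _ ↔ HasSoc R (N ⧸ (Ideal.ofList (z :: bs) • ⊤ : Submodule R N)) :=
          (hasSoc_congr_iff (Submodule.quotOfListConsSMulTopEquivQuotSMulTopInner N z bs)).symm
      _ ↔ HasSoc R (QuotSMulTop z (N ⧸ (Ideal.ofList bs • ⊤ : Submodule R N))) :=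
          hasSoc_congr_iff (Submodule.quotOfListConsSMulTopEquivQuotSMulTopOuter N z bs)
      _ ↔ HasSoc R (QuotSMulTop b (N ⧸ (Ideal.ofList bs • ⊤ : Submodule R N))) :=
          ⟨HasSoc.exchange hbm hz2 hbreg, HasSoc.exchange hzm hbreg hz2⟩
      _ ↔ HasSoc R (N ⧸ (Ideal.ofList (bs ++ [b]) • ⊤ : Submodule R N)) :=
          (hasSoc_congr_iff (eSnoc N bs b)).symm

/-- All weakly regular sequences are bounded by the length of a maximal one. -/
theorem length_le_of_hasSoc {M : Type u} [AddCommGroup M] [Module R M] [Module.Finite R M]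
    [Nontrivial M] {rs ts : List R}
    (hrs_m : ∀ r ∈ rs, r ∈ maximalIdeal R) (hrs : IsWeaklyRegular M rs)
    (hsoc : HasSoc R (M ⧸ (Ideal.ofList rs • ⊤ : Submodule R M)))
    (hts_m : ∀ r ∈ ts, r ∈ maximalIdeal R) (hts : IsWeaklyRegular M ts) :
    ts.length ≤ rs.length := by
  by_contra hlen
  push_neg at hlen
  have hsplit : ts = ts.take rs.length ++ ts.drop rs.length := (List.take_append_drop _ _).symm
  have hdne : ts.drop rs.length ≠ [] := by
    rw [← List.length_pos_iff]
    rw [List.length_drop]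
    omega
  rw [hsplit, isWeaklyRegular_append_iff] at hts
  obtain ⟨ht1, ht2⟩ := hts
  rw [← List.cons_head_tail hdne, isWeaklyRegular_cons_iff] at ht2
  have hureg := ht2.1
  have hum : (ts.drop rs.length).head hdne ∈ maximalIdeal R :=
    hts_m _ (List.mem_of_mem_drop (List.head_mem hdne))
  have htake_len : (ts.take rs.length).length = rs.length := by
    rw [List.length_take]; omega
  have hiff := hasSoc_quot_congr (R := R) rs.length M (ts.take rs.length) rs htake_len rfl
    (fun r hr => hts_m r (List.mem_of_mem_take hr)) hrs_m ht1 hrs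
  exact not_hasSoc_of_regular hum hureg (hiff.mpr hsoc)

end Rees


section Krull

variable {R : Type*} [CommRing R]

theorem ideal_smul_top_eq (J : Ideal R) : (J • ⊤ : Submodule R R) = J := by
  apply le_antisymm
  · refine Submodule.smul_le.mpr fun r hr n _ => ?_
    rw [smul_eq_mul]
    exact J.mul_mem_right n hr
  · intro x hx
    have := Submodule.smul_mem_smul hx (Submodule.mem_top (x := (1 : R)))
    simpa using this

/-- An element of a minimal prime over `J` is a zerodivisor mod `J`. -/
theorem not_isSMulRegular_of_mem_minimalPrimes {J Q : Ideal R} (hQ : Q ∈ J.minimalPrimes)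
    {y : R} (hy : y ∈ Q) (hreg : IsSMulRegular (R ⧸ (J • ⊤ : Submodule R R)) y) : False := by
  rw [ideal_smul_top_eq] at hreg
  haveI hQp : Q.IsPrime := hQ.1.1
  have hJQ : J ≤ Q := hQ.1.2
  set S := R ⧸ J
  set f : R →+* S := Ideal.Quotient.mk J
  have hfsurj : Function.Surjective f := Ideal.Quotient.mk_surjective
  set Qb : Ideal S := Q.map f with hQb
  haveI hQbp : Qb.IsPrime := Ideal.map_isPrime_of_surjective hfsurj (by
    rw [Ideal.mk_ker]; exact hJQ)
  -- Qb is a minimal prime of S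
  have hQbmin : Qb ∈ minimalPrimes S := by
    rw [minimalPrimes_eq_minimals]
    constructor
    · exact hQbp
    · intro P' hP' hle
      haveI := hP'
      have hJC : J ≤ P'.comap f := fun x hx => by
        simp only [Ideal.mem_comap]
        have : f x = 0 := Ideal.Quotient.eq_zero_iff_mem.mpr hx
        rw [this]; exact P'.zero_mem
      have hCQ : P'.comap f ≤ Q := by
        refine le_trans (Ideal.comap_mono hle) ?_
        rw [hQb, Ideal.comap_map_of_surjective f hfsurj]
        rw [← RingHom.ker_eq_comap_bot, Ideal.mk_ker]
        exact sup_le le_rfl hJQ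
      have hQC : Q ≤ P'.comap f := hQ.2 ⟨Ideal.comap_isPrime f P', hJC⟩ hCQ
      calc Qb = Q.map f := rfl
        _ ≤ (P'.comap f).map f := Ideal.map_mono hQC
        _ = P' := Ideal.map_comap_of_surjective f hfsurj P'
  -- y's image is in Qb, hence nilpotent in the localization
  have hyQb : f y ∈ Qb := Ideal.mem_map_of_mem f hy
  have hnil : IsNilpotent (algebraMap S (Localization Qb.primeCompl) (f y)) := by
    haveI hss := IsLocalization.subsingleton_primeSpectrum_of_mem_minimalPrimes Qb hQbmin
      (Localization Qb.primeCompl)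
    haveI : Ring.KrullDimLE 0 (Localization Qb.primeCompl) := Ring.KrullDimLE.mk₀ fun I hI => by
      have := congrArg PrimeSpectrum.asIdeal (Subsingleton.elim (⟨I, hI⟩ : PrimeSpectrum _)
        ⟨_, (maximalIdeal.isMaximal _).isPrime⟩)
      rw [show I = _ from this]; exact maximalIdeal.isMaximal _
    rw [Ring.KrullDimLE.isNilpotent_iff_mem_maximalIdeal]
    exact (IsLocalization.AtPrime.to_map_mem_maximal_iff _ Qb (f y)).mpr hyQb
  obtain ⟨n, hn⟩ := hnil
  rw [← map_pow, IsLocalization.map_eq_zero_iff Qb.primeCompl] at hn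
  obtain ⟨s, hs⟩ := hn
  -- minimal counterexample
  have : ∀ n : ℕ, ∀ s : S, s ∉ Qb → s * (f y) ^ n = 0 → False := by
    intro n
    induction n with
    | zero =>
      intro s hsQ hs0
      rw [pow_zero, mul_one] at hs0
      exact hsQ (hs0 ▸ Qb.zero_mem)
    | succ n ihn =>
      intro s hsQ hs0
      by_cases hsy : s * (f y) ^ n = 0
      · exact ihn s hsQ hsy
      · -- f y is a zerodivisor: (f y) * (s * (f y)^n) = 0
        have hmul : (f y) * (s * (f y) ^ n) = 0 := by
          rw [← hs0]; ring
        -- contradiction with regularity of y on S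
        apply hsy
        have : y • (s * (f y) ^ n) = y • (0 : S) := by
          rw [smul_zero]
          have hsm : y • (s * (f y) ^ n) = (f y) * (s * (f y) ^ n) := by
            obtain ⟨r, hr⟩ := hfsurj (s * (f y) ^ n)
            rw [← hr]
            show y • f r = f y * f r
            rw [← map_mul]
            rfl
          rw [hsm, hmul]
        exact hreg this
  exact this n s s.2 hs


theorem exists_primeSeries (zs : List R) :
    ∀ (_ : IsWeaklyRegular R zs) (P : Ideal R) (hP : P.IsPrime), Ideal.ofList zs ≤ P →
    ∃ c : LTSeries (PrimeSpectrum R), c.length = zs.length ∧ c.last = ⟨P, hP⟩ := by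
  induction zs using List.reverseRecOn with
  | nil =>
    intro _ P hP _
    exact ⟨RelSeries.singleton _ ⟨P, hP⟩, rfl, RelSeries.last_singleton _⟩
  | append_singleton ws y ih =>
    intro hwr P hP hle
    have h1 := (isWeaklyRegular_append_iff R ws [y]).mp hwr
    have hwreg : IsWeaklyRegular R ws := h1.1
    have hyreg : IsSMulRegular (R ⧸ (Ideal.ofList ws • ⊤ : Submodule R R)) y :=
      (isWeaklyRegular_singleton_iff _ y).mp h1.2
    have hwsP : Ideal.ofList ws ≤ P :=
      le_trans (by rw [Ideal.ofList_append]; exact le_sup_left) hle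
    obtain ⟨Q, hQmin, hQP⟩ := Ideal.exists_minimalPrimes_le hwsP
    haveI hQp : Q.IsPrime := hQmin.1.1
    have hyP : y ∈ P := hle (Ideal.subset_span (by simp))
    have hyQ : y ∉ Q := fun hy => not_isSMulRegular_of_mem_minimalPrimes hQmin hy hyreg
    have hQPlt : Q < P := lt_of_le_of_ne hQP (fun h => hyQ (h ▸ hyP))
    obtain ⟨c, hclen, hclast⟩ := ih hwreg Q hQp hQmin.1.2
    have hlt : c.last < (⟨P, hP⟩ : PrimeSpectrum R) := by
      rw [hclast]
      exact hQPlt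
    refine ⟨c.snoc ⟨P, hP⟩ hlt, ?_, RelSeries.last_snoc _ _ _⟩
    simp [RelSeries.snoc, RelSeries.append, hclen]

theorem length_le_ringKrullDim_of_wr [IsLocalRing R] {zs : List R} (hwr : IsWeaklyRegular R zs)
    (hm : ∀ r ∈ zs, r ∈ maximalIdeal R) : (zs.length : WithBot ℕ∞) ≤ ringKrullDim R := by
  obtain ⟨c, hclen, -⟩ := exists_primeSeries zs hwr (maximalIdeal R)
    ((maximalIdeal.isMaximal R).isPrime) (Ideal.span_le.mpr hm)
  have h := Order.LTSeries.length_le_krullDim c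
  rw [hclen] at h
  exact h

end Krull


section KeyLemma

variable {R : Type*} [CommRing R] {F M : Type*} [AddCommGroup F] [Module R F]
  [AddCommGroup M] [Module R M]

theorem mem_pointwise_smul_top_iff' (a : R) (w : F) :
    w ∈ (a • ⊤ : Submodule R F) ↔ ∃ v : F, a • v = w := by
  constructor
  · intro hw
    have : w ∈ ((a • ⊤ : Submodule R F) : Set F) := hw
    rw [Submodule.coe_pointwise_smul] at this
    obtain ⟨v, -, hv⟩ := this
    exact ⟨v, hv⟩
  · rintro ⟨v, rfl⟩
    exact Submodule.smul_mem_pointwise_smul v a ⊤ trivial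

/-- Key lemma: for a weakly `M`-regular sequence generating `J`,
`ker π ∩ J•F = J•(ker π)`. -/
theorem ker_inf_ofList_smul (π : F →ₗ[R] M) (hπ : Surjective π) :
    ∀ (rs : List R), IsWeaklyRegular M rs →
      LinearMap.ker π ⊓ (Ideal.ofList rs • ⊤ : Submodule R F) ≤
        Ideal.ofList rs • (LinearMap.ker π) := by
  intro rs
  induction rs using List.reverseRecOn with
  | nil =>
    intro _
    rw [Ideal.ofList_nil, bot_smul, bot_smul, inf_bot_eq]
  | append_singleton ws y ih =>
    intro hwr
    have h1 := (isWeaklyRegular_append_iff M ws [y]).mp hwr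
    have hws : IsWeaklyRegular M ws := h1.1
    have hyreg : IsSMulRegular (M ⧸ (Ideal.ofList ws • ⊤ : Submodule R M)) y :=
      (isWeaklyRegular_singleton_iff _ y).mp h1.2
    have hJ : Ideal.ofList (ws ++ [y]) = Ideal.ofList ws ⊔ Ideal.span {y} := by
      rw [Ideal.ofList_append, Ideal.ofList_cons, Ideal.ofList_nil, sup_bot_eq]
    rintro v ⟨hvK, hvJ⟩
    rw [hJ, Submodule.sup_smul] at hvJ ⊢
    obtain ⟨u, hu, w, hw, huw⟩ := Submodule.mem_sup.mp hvJ
    rw [Submodule.ideal_span_singleton_smul] at hw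
    obtain ⟨f, hf⟩ := (mem_pointwise_smul_top_iff' y w).mp hw
    -- π v = 0
    have hπv : π v = 0 := hvK
    have hπu : π u ∈ (Ideal.ofList ws • ⊤ : Submodule R M) := by
      have h2 : π u ∈ Submodule.map π (Ideal.ofList ws • ⊤ : Submodule R F) :=
        Submodule.mem_map_of_mem hu
      rw [Submodule.map_smul''] at h2
      exact Submodule.smul_mono le_rfl le_top h2
    have hyπf : y • π f ∈ (Ideal.ofList ws • ⊤ : Submodule R M) := by
      have : π u + y • π f = 0 := by
        rw [← map_smul, hf, ← map_add, huw, hπv]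
      have h3 : y • π f = -π u := eq_neg_of_add_eq_zero_right this
      rw [h3]; exact neg_mem hπu
    have hπf : π f ∈ (Ideal.ofList ws • ⊤ : Submodule R M) := by
      have h4 : y • Submodule.Quotient.mk (p := (Ideal.ofList ws • ⊤ : Submodule R M)) (π f)
          = 0 := by
        rw [← Submodule.Quotient.mk_smul, Submodule.Quotient.mk_eq_zero]
        exact hyπf
      have h5 := hyreg (by rw [h4, smul_zero] :
        y • Submodule.Quotient.mk (p := (Ideal.ofList ws • ⊤ : Submodule R M)) (π f) = y • 0)
      rwa [← Submodule.Quotient.mk_eq_zero]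
    -- lift: π f = π w' with w' ∈ J•F
    have htop : (Ideal.ofList ws • ⊤ : Submodule R M) =
        Submodule.map π (Ideal.ofList ws • ⊤ : Submodule R F) := by
      rw [Submodule.map_smul'', Submodule.map_top, LinearMap.range_eq_top.mpr hπ]
    rw [htop] at hπf
    obtain ⟨w', hw', hww'⟩ := hπf
    set g := f - w' with hg
    have hgK : g ∈ LinearMap.ker π := by
      rw [LinearMap.mem_ker, hg, map_sub, hww', sub_self]
    have hsplit : (u + y • w') + y • g = v := by
      rw [hg, smul_sub, hf, ← huw]
      abel
    have huyw' : u + y • w' ∈ LinearMap.ker π ⊓ (Ideal.ofList ws • ⊤ : Submodule R F) := by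
      constructor
      · have h6 : u + y • w' = v - y • g := by rw [← hsplit]; abel
        rw [h6]
        exact sub_mem hvK (Submodule.smul_mem _ y hgK)
      · exact Submodule.add_mem _ hu (Submodule.smul_mem _ y hw')
    have hin : u + y • w' ∈ Ideal.ofList ws • (LinearMap.ker π) := ih hws huyw'
    rw [← hsplit]
    apply Submodule.add_mem_sup hin
    rw [Submodule.ideal_span_singleton_smul]
    exact Submodule.smul_mem_pointwise_smul g y _ hgK

end KeyLemma


end SyzygyLemmas

/-- Over a Gorenstein local ring, the first syzygy of a f.g. MCM module in a minimal free
resolution has no nonzero free direct summand. -/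
theorem stmt7 (R : Type) [CommRing R] [IsLocalRing R] [IsNoetherianRing R]
    (hR : IsGorensteinLocal R) (M F : Type) [AddCommGroup M] [Module R M] [Module.Finite R M]
    [AddCommGroup F] [Module R F] [Module.Free R F] [Module.Finite R F]
    (hM : IsMCM R M) (π : F →ₗ[R] M) (hπ : Function.Surjective π)
    (hmin : LinearMap.ker π ≤ (maximalIdeal R) • (⊤ : Submodule R F)) :
    ¬ ∃ p q : Submodule R (LinearMap.ker π), IsCompl p q ∧ q ≠ ⊥ ∧
      Nonempty (q ≃ₗ[R] R) := by
  open Pointwise RingTheory.Sequence Submodule Function in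
  rintro ⟨p, q, hcompl, hqne, ⟨e⟩⟩
  set xq : q := e.symm 1 with hxq
  have hxq0 : xq ≠ 0 := by
    intro h
    have h1 : e xq = 1 := by rw [hxq, LinearEquiv.apply_symm_apply]
    rw [h, map_zero] at h1
    exact zero_ne_one h1
  have hxK0 : (xq : LinearMap.ker π) ≠ 0 := fun h => hxq0 (Subtype.ext h)
  set X : F := ((xq : LinearMap.ker π) : F) with hX
  have hX0 : X ≠ 0 := fun h => hxK0 (Subtype.ext h)
  haveI : Nontrivial F := ⟨X, 0, hX0⟩
  have hXK : X ∈ LinearMap.ker π := SetLike.coe_mem _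
  have hjac : ∀ r ∈ maximalIdeal R, r ∈ (Module.annihilator R F).jacobson :=
    fun r hr => IsLocalRing.maximalIdeal_le_jacobson _ hr
  haveI : Nontrivial M := by
    by_contra h
    rw [not_nontrivial_iff_subsingleton] at h
    have hK1 : LinearMap.ker π = ⊤ := by
      ext v
      simp only [LinearMap.mem_ker, Submodule.mem_top, iff_true]
      exact Subsingleton.elim _ _
    have h2 : (⊤ : Submodule R F) = maximalIdeal R • ⊤ :=
      le_antisymm (hK1 ▸ hmin) (Submodule.smul_le.mpr fun r _ n _ => Submodule.smul_mem _ r trivial)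
    exact Submodule.top_ne_ideal_smul_of_le_jacobson_annihilator
      (Ideal.span_le.mpr fun r hr => hjac r hr) (by rw [Ideal.span_eq] at *; exact h2)
  -- the main Noetherian induction
  have main : ∀ J : Ideal R, (∃ rs : List R, J = Ideal.ofList rs ∧
      (∀ r ∈ rs, r ∈ maximalIdeal R) ∧ IsWeaklyRegular M rs ∧ IsWeaklyRegular R rs) → False := by
    intro J
    induction J using IsNoetherian.induction with
    | hgt J ih =>
    rintro ⟨rs, rfl, hm, hwM, hwR⟩
    haveI hNM : Nontrivial (M ⧸ (Ideal.ofList rs • ⊤ : Submodule R M)) := nontrivial_quot_ofList hm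
    haveI hNR : Nontrivial (R ⧸ (Ideal.ofList rs • ⊤ : Submodule R R)) := nontrivial_quot_ofList hm
    by_cases hsocR : HasSoc R (R ⧸ (Ideal.ofList rs • ⊤ : Submodule R R))
    · -- socle contradiction with the free direct summand
      obtain ⟨zq, hz0, hzann⟩ := hsocR
      obtain ⟨s, rfl⟩ := Submodule.Quotient.mk_surjective _ zq
      have hsJ : s ∉ (Ideal.ofList rs • ⊤ : Submodule R R) := by
        rwa [Ne, Submodule.Quotient.mk_eq_zero] at hz0
      have hsm : ∀ a ∈ maximalIdeal R, a * s ∈ Ideal.ofList rs := by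
        intro a ha
        have h1 := hzann a ha
        rw [← Submodule.Quotient.mk_smul, Submodule.Quotient.mk_eq_zero, ideal_smul_top_eq] at h1
        simpa [smul_eq_mul] using h1
      have hXm : X ∈ (maximalIdeal R • ⊤ : Submodule R F) := hmin hXK
      have hsX : s • X ∈ (Ideal.ofList rs • ⊤ : Submodule R F) := by
        refine Submodule.smul_induction_on (p := fun x => s • x ∈ _) hXm ?_ ?_
        · intro a ha n _
          have h2 : s • a • n = (a * s) • n := by rw [smul_smul, mul_comm]
          rw [h2]
          exact Submodule.smul_mem_smul (hsm a ha) trivial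
        · intro x y hx hy
          rw [smul_add]
          exact Submodule.add_mem _ hx hy
      have hsXK : s • X ∈ LinearMap.ker π := (LinearMap.ker π).smul_mem s hXK
      have hkey : s • X ∈ Ideal.ofList rs • LinearMap.ker π := ker_inf_ofList_smul π hπ rs hwM ⟨hsXK, hsX⟩
      -- pull back into ↥K
      have h7 : s • (xq : LinearMap.ker π) ∈ (Ideal.ofList rs • ⊤ : Submodule R (LinearMap.ker π)) := by
        have h8 : Ideal.ofList rs • LinearMap.ker π = Submodule.map (LinearMap.ker π).subtype
            (Ideal.ofList rs • ⊤ : Submodule R (LinearMap.ker π)) := by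
          rw [Submodule.map_smul'', Submodule.map_top, Submodule.range_subtype]
        rw [h8] at hkey
        obtain ⟨w, hw, hww⟩ := hkey
        have h9 : w = s • (xq : LinearMap.ker π) := by
          apply Submodule.injective_subtype (LinearMap.ker π)
          rw [hww]
          rfl
        rwa [← h9]
      set pr : LinearMap.ker π →ₗ[R] q := Submodule.linearProjOfIsCompl q p hcompl.symm with hpr
      have h10 : pr (s • (xq : LinearMap.ker π)) ∈ (Ideal.ofList rs • ⊤ : Submodule R q) := by
        have h11 : pr (s • (xq : LinearMap.ker π)) ∈ Submodule.map pr (Ideal.ofList rs • ⊤) :=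
          Submodule.mem_map_of_mem h7
        rw [Submodule.map_smul''] at h11
        exact Submodule.smul_mono le_rfl le_top h11
      have h12 : pr (s • (xq : LinearMap.ker π)) = s • xq := by
        rw [map_smul, hpr, Submodule.linearProjOfIsCompl, Submodule.linearProjOfIsCompl_apply_left]
      have h13 : e (s • xq) ∈ (Ideal.ofList rs • ⊤ : Submodule R R) := by
        rw [← h12]
        have h14 : e (pr (s • (xq : LinearMap.ker π))) ∈ Submodule.map (e : q →ₗ[R] R) (Ideal.ofList rs • ⊤) :=
          Submodule.mem_map_of_mem h10
        rw [Submodule.map_smul''] at h14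
        exact Submodule.smul_mono le_rfl le_top h14
      have h15 : e (s • xq) = s := by
        rw [map_smul, hxq, LinearEquiv.apply_symm_apply, smul_eq_mul, mul_one]
      rw [h15] at h13
      exact hsJ h13
    · by_cases hsocM : HasSoc R (M ⧸ (Ideal.ofList rs • ⊤ : Submodule R M))
      · -- Krull dimension contradiction
        obtain ⟨y, hym, hyR, -⟩ := exists_common_regular hsocR hsocR
        have hwR' : IsWeaklyRegular R (rs ++ [y]) := (wr_snoc_iff R rs y).mpr ⟨hwR, hyR⟩
        have hm' : ∀ r ∈ rs ++ [y], r ∈ maximalIdeal R := by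
          intro r hr
          rcases List.mem_append.mp hr with h | h
          · exact hm r h
          · rw [List.mem_singleton] at h; subst h; exact hym
        have hkrull := length_le_ringKrullDim_of_wr hwR' hm'
        have hdepth : edepth (maximalIdeal R) M = (rs.length : ℕ∞) := by
          apply le_antisymm
          · apply sSup_le
            rintro n ⟨ts, rfl, htm, htreg⟩
            exact_mod_cast length_le_of_hasSoc hm hwM hsocM htm htreg.toIsWeaklyRegular
          · apply le_sSup
            exact ⟨rs, rfl, hm,
              (IsLocalRing.isRegular_iff_isWeaklyRegular_of_subset_maximalIdeal hm).mpr hwM⟩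
        rw [IsMCM, hdepth] at hM
        rw [← hM] at hkrull
        rw [List.length_append, List.length_singleton] at hkrull
        have : (rs.length + 1 : ℕ) ≤ (rs.length : ℕ) := by exact_mod_cast hkrull
        omega
      · -- extend the common regular sequence
        obtain ⟨y, hym, hyM, hyR⟩ := exists_common_regular hsocM hsocR
        have hJlt : Ideal.ofList rs < Ideal.ofList (rs ++ [y]) := by
          have hsup : Ideal.ofList (rs ++ [y]) = Ideal.ofList rs ⊔ Ideal.span {y} := by
            rw [Ideal.ofList_append, Ideal.ofList_cons, Ideal.ofList_nil, sup_bot_eq]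
          rw [hsup]
          refine lt_of_le_of_ne le_sup_left (fun hEq => ?_)
          have hy : y ∈ Ideal.ofList rs := by
            have hmem : y ∈ Ideal.ofList rs ⊔ Ideal.span {y} :=
              Ideal.mem_sup_right (Ideal.subset_span rfl)
            rwa [← hEq] at hmem
          have h1 : y • (Submodule.Quotient.mk 1 :
              R ⧸ (Ideal.ofList rs • ⊤ : Submodule R R)) = 0 := by
            rw [← Submodule.Quotient.mk_smul, Submodule.Quotient.mk_eq_zero, ideal_smul_top_eq]
            simpa [smul_eq_mul] using hy
          have h2 := hyR (show y • (Submodule.Quotient.mk 1 :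
              R ⧸ (Ideal.ofList rs • ⊤ : Submodule R R)) = y • 0 by rw [h1, smul_zero])
          rw [Submodule.Quotient.mk_eq_zero, ideal_smul_top_eq] at h2
          have h3 : Ideal.ofList rs = ⊤ := (Ideal.eq_top_iff_one _).mpr (by simpa using h2)
          have h4 : (1 : R) ∈ maximalIdeal R := by
            have := hm
            have : Ideal.ofList rs ≤ maximalIdeal R := Ideal.span_le.mpr (fun r hr => hm r hr)
            rw [h3] at this
            exact this trivial
          exact (maximalIdeal.isMaximal R).ne_top ((Ideal.eq_top_iff_one _).mpr h4)
        refine ih _ hJlt ⟨rs ++ [y], rfl, ?_, (wr_snoc_iff M rs y).mpr ⟨hwM, hyM⟩,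
          (wr_snoc_iff R rs y).mpr ⟨hwR, hyR⟩⟩
        intro r hr
        rcases List.mem_append.mp hr with h | h
        · exact hm r h
        · rw [List.mem_singleton] at h; subst h; exact hym
  exact main (Ideal.ofList []) ⟨[], rfl, by simp, .nil R M, .nil R R⟩
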